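/- Normalization for NF: every natural deduction derivation of A from assumptions Γ in the natural deduction system NF for Corsi's logic F can be effectively transformed into a normal derivation of A from Γ, i.e., one in which every major premise of an elimination rule is either an assumption or the conclusion of an elimination rule different from ∨E. -/

import Mathlib

/-- Formulas of subintuitionistic propositional logic. -/
inductive Fml : Type
  | atom : ℕ → Fml
  | bot  : Fml
  | and  : Fml → Fml → Fml
  | or   : Fml → Fml → Fml
  | imp  : Fml → Fml → Fml
deriving DecidableEq

/-- `A ↔ B` abbreviates `(A → B) ∧ (B → A)`. -/
def Fml.biimp (A B : Fml) : Fml := (A.imp B).and (B.imp A)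

/-- The extra axiom schemes / rules among I, C, D, Ĉ, D̂, N, N₂. -/
inductive ExtAx : Type
  | I | C | D | Chat | Dhat | N | N2
deriving DecidableEq

/-- Theorems of the Hilbert system WF extended with the schemes/rules in `E`
(derivations with no assumptions; all rules unrestricted here). -/
inductive HThm (E : Set ExtAx) : Fml → Prop
  | ax1 (A B : Fml)   : HThm E (A.imp (A.or B))
  | ax2 (A B : Fml)   : HThm E (B.imp (A.or B))
  | ax3 (A B : Fml)   : HThm E ((A.and B).imp A)
  | ax4 (A B : Fml)   : HThm E ((A.and B).imp B)
  | ax7 (A B C : Fml) : HThm E ((A.and (B.or C)).imp ((A.and B).or (A.and C)))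
  | ax8 (A : Fml)     : HThm E (A.imp A)
  | ax14 (A : Fml)    : HThm E (Fml.bot.imp A)
  | mp {A B : Fml}    : HThm E A → HThm E (A.imp B) → HThm E B
  | af {A : Fml} (B : Fml) : HThm E A → HThm E (B.imp A)
  | tr {A B C : Fml}  : HThm E (A.imp B) → HThm E (B.imp C) → HThm E (A.imp C)
  | rc {A B C : Fml}  : HThm E (A.imp B) → HThm E (A.imp C) → HThm E (A.imp (B.and C))
  | rd {A B C : Fml}  : HThm E (A.imp C) → HThm E (B.imp C) → HThm E ((A.or B).imp C)
  | conj {A B : Fml}  : HThm E A → HThm E B → HThm E (A.and B)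
  | re {A B C D : Fml} : HThm E (A.biimp B) → HThm E (C.biimp D) →
      HThm E ((A.imp C).biimp (B.imp D))
  | axI (A B C : Fml) : ExtAx.I ∈ E →
      HThm E (((A.imp B).and (B.imp C)).imp (A.imp C))
  | axC (A B C : Fml) : ExtAx.C ∈ E →
      HThm E (((A.imp B).and (A.imp C)).imp (A.imp (B.and C)))
  | axD (A B C : Fml) : ExtAx.D ∈ E →
      HThm E (((A.imp C).and (B.imp C)).imp ((A.or B).imp C))
  | axChat (A B C : Fml) : ExtAx.Chat ∈ E →
      HThm E ((A.imp (B.and C)).imp ((A.imp B).and (A.imp C)))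
  | axDhat (A B C : Fml) : ExtAx.Dhat ∈ E →
      HThm E (((A.or B).imp C).imp ((A.imp C).and (B.imp C)))
  | ruleN {A B C D : Fml} : ExtAx.N ∈ E →
      HThm E (A.imp (B.or C)) → HThm E (C.imp (A.or D)) →
      HThm E ((A.and D).imp B) → HThm E ((C.and B).imp D) →
      HThm E ((A.imp B).biimp (C.imp D))
  | ruleN2 {A B C D : Fml} : ExtAx.N2 ∈ E →
      HThm E (C.imp (A.or D)) → HThm E ((C.and B).imp D) →
      HThm E ((A.imp B).imp (C.imp D))

/-- Restricted derivability from assumptions in the Hilbert system WF + `E`: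
besides assumptions and theorems, only the conjunction rule is unrestricted, and
modus ponens may be used only when the major premise `A → B` is a theorem
(derived with no assumptions); all other rules are confined to theorems. -/
inductive HDer (E : Set ExtAx) (Γ : Set Fml) : Fml → Prop
  | hyp {A : Fml}  : A ∈ Γ → HDer E Γ A
  | thm {A : Fml}  : HThm E A → HDer E Γ A
  | conj {A B : Fml} : HDer E Γ A → HDer E Γ B → HDer E Γ (A.and B)
  | mp {A B : Fml} : HDer E Γ A → HThm E (A.imp B) → HDer E Γ B

/-- Tags for the optional implication-introduction rules of the natural
deduction systems. -/
inductive NRule : Type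
  | impI1 | impI2 | impN | impN2 | impChat | impDhat | impAnd | impOr | impTr
deriving DecidableEq

/-- Natural deduction derivations for the system with optional rules `R`.
`Deriv R Γ A` is a derivation of `A` all of whose open assumptions lie in `Γ`. -/
inductive Deriv (R : Set NRule) : Set Fml → Fml → Type
  | hyp (Γ : Set Fml) (A : Fml) : A ∈ Γ → Deriv R Γ A
  | andI {Γ : Set Fml} {A B : Fml} :
      Deriv R Γ A → Deriv R Γ B → Deriv R Γ (A.and B)
  | andE1 {Γ : Set Fml} {A B : Fml} :
      Deriv R Γ (A.and B) → Deriv R Γ A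
  | andE2 {Γ : Set Fml} {A B : Fml} :
      Deriv R Γ (A.and B) → Deriv R Γ B
  | orI1 {Γ : Set Fml} {A : Fml} (B : Fml) :
      Deriv R Γ A → Deriv R Γ (A.or B)
  | orI2 {Γ : Set Fml} (A : Fml) {B : Fml} :
      Deriv R Γ B → Deriv R Γ (A.or B)
  | orE {Γ : Set Fml} {A B C : Fml} :
      Deriv R Γ (A.or B) → Deriv R (insert A Γ) C → Deriv R (insert B Γ) C →
      Deriv R Γ C
  | botE {Γ : Set Fml} (A : Fml) :
      Deriv R Γ Fml.bot → Deriv R Γ A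
  | impI {Γ : Set Fml} {A B : Fml} :
      Deriv R {A} B → Deriv R Γ (A.imp B)
  | impE {Γ : Set Fml} {A B : Fml} :
      Deriv R Γ A → Deriv R (∅ : Set Fml) (A.imp B) → Deriv R Γ B
  | impI1 {Γ : Set Fml} {A B D : Fml} :
      NRule.impI1 ∈ R → Deriv R {B} D → Deriv R {D} B →
      Deriv R Γ ((A.imp B).imp (A.imp D))
  | impI2 {Γ : Set Fml} {A B D : Fml} :
      NRule.impI2 ∈ R → Deriv R {B} D → Deriv R {D} B →
      Deriv R Γ ((B.imp A).imp (D.imp A))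
  | impIN {Γ : Set Fml} {A B C D : Fml} :
      NRule.impN ∈ R →
      Deriv R {A} (C.or B) → Deriv R {D} B → Deriv R {C} (A.or D) → Deriv R {B} D →
      Deriv R Γ ((A.imp B).imp (C.imp D))
  | impIN2 {Γ : Set Fml} {A B C D : Fml} :
      NRule.impN2 ∈ R →
      Deriv R {C} (A.or D) → Deriv R {B} D →
      Deriv R Γ ((A.imp B).imp (C.imp D))
  | impIChat {Γ : Set Fml} {A B : Fml} (C : Fml) :
      NRule.impChat ∈ R → Deriv R {A} B →
      Deriv R Γ ((C.imp A).imp (C.imp B))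
  | impIDhat {Γ : Set Fml} {A B : Fml} (C : Fml) :
      NRule.impDhat ∈ R → Deriv R {A} B →
      Deriv R Γ ((B.imp C).imp (A.imp C))
  | impIAnd {Γ : Set Fml} {A B C : Fml} :
      NRule.impAnd ∈ R → Deriv R Γ (A.imp B) → Deriv R Γ (A.imp C) →
      Deriv R Γ (A.imp (B.and C))
  | impIOr {Γ : Set Fml} {A B C : Fml} :
      NRule.impOr ∈ R → Deriv R Γ (A.imp C) → Deriv R Γ (B.imp C) →
      Deriv R Γ ((A.or B).imp C)
  | impITr {Γ : Set Fml} {A B C : Fml} :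
      NRule.impTr ∈ R → Deriv R Γ (A.imp B) → Deriv R Γ (B.imp C) →
      Deriv R Γ (A.imp C)

/-- `Γ ⊢ A` in the natural deduction system with optional rules `R`. -/
def NDer (R : Set NRule) (Γ : Set Fml) (A : Fml) : Prop :=
  Nonempty (Deriv R Γ A)

/-- A derivation may serve as the major premise of an elimination rule in a
normal derivation: it is an assumption or ends with an elimination rule
different from ∨E (i.e. ∧E or →E). -/
def Deriv.MajorOK : ∀ {R : Set NRule} {Γ : Set Fml} {A : Fml}, Deriv R Γ A → Prop
  | _, _, _, .hyp _ _ _ => True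
  | _, _, _, .andE1 _   => True
  | _, _, _, .andE2 _   => True
  | _, _, _, .impE _ _  => True
  | _, _, _, _          => False

/-- A derivation is normal if every major premise of an elimination rule is
either an assumption or the conclusion of an elimination rule different
from ∨E. -/
def Deriv.Normal {R : Set NRule} : ∀ {Γ : Set Fml} {A : Fml}, Deriv R Γ A → Prop
  | _, _, .hyp _ _ _ => True
  | _, _, .andI d e => d.Normal ∧ e.Normal
  | _, _, .andE1 d => d.MajorOK ∧ d.Normal
  | _, _, .andE2 d => d.MajorOK ∧ d.Normal
  | _, _, .orI1 _ d => d.Normal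
  | _, _, .orI2 _ d => d.Normal
  | _, _, .orE d e f => d.MajorOK ∧ d.Normal ∧ e.Normal ∧ f.Normal
  | _, _, .botE _ d => d.Normal
  | _, _, .impI d => d.Normal
  | _, _, .impE d e => e.MajorOK ∧ d.Normal ∧ e.Normal
  | _, _, .impI1 _ d e => d.Normal ∧ e.Normal
  | _, _, .impI2 _ d e => d.Normal ∧ e.Normal
  | _, _, .impIN _ d e f g => d.Normal ∧ e.Normal ∧ f.Normal ∧ g.Normal
  | _, _, .impIN2 _ d e => d.Normal ∧ e.Normal
  | _, _, .impIChat _ _ d => d.Normal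
  | _, _, .impIDhat _ _ d => d.Normal
  | _, _, .impIAnd _ d e => d.Normal ∧ e.Normal
  | _, _, .impIOr _ d e => d.Normal ∧ e.Normal
  | _, _, .impITr _ d e => d.Normal ∧ e.Normal

/-!
Normal derivations are captured by the inductive predicate `Nf`, whose only eliminations
are ∨E and the ∧E-spines `Neu` hanging off an assumption. There is no →E clause: the major
premise of →E must be closed, and a closed derivation never ends in a spine, so normal
derivations contain no →E at all.

Every rule of NF is then admissible for `Nf`. ∧E inverts the last rule. ∨E is permuted
into the branches of ∨E's and below ⊥E until its major premise is a spine or an ∨I; the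
latter is a cut on a disjunct. A cut on `A` replaces each spine ending at the assumption
`A` by the corresponding ∧-projection of the derivation of `A`; the new redexes are ∨E's
on disjunctions that are ∧-projections of `A`, whose disjuncts are smaller than `A`.
Finally →E, with a closed major premise `A → B`, is eliminated by induction on the normal
closed derivation of `A → B`, which ends in →I, →_∧I, →_∨I or →_tr I.
-/

variable {R : Set NRule} {Γ Δ : Set Fml} {A B C : Fml}

inductive Neu (Γ : Set Fml) : Fml → Prop
  | hyp {A : Fml} : A ∈ Γ → Neu Γ A
  | andE1 {A B : Fml} : Neu Γ (A.and B) → Neu Γ A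
  | andE2 {A B : Fml} : Neu Γ (A.and B) → Neu Γ B

inductive Nf (R : Set NRule) : Set Fml → Fml → Prop
  | ne {Γ : Set Fml} {A : Fml} : Neu Γ A → Nf R Γ A
  | andI {Γ : Set Fml} {A B : Fml} : Nf R Γ A → Nf R Γ B → Nf R Γ (A.and B)
  | orI1 {Γ : Set Fml} {A : Fml} (B : Fml) : Nf R Γ A → Nf R Γ (A.or B)
  | orI2 {Γ : Set Fml} (A : Fml) {B : Fml} : Nf R Γ B → Nf R Γ (A.or B)
  | orE {Γ : Set Fml} {A B C : Fml} :
      Neu Γ (A.or B) → Nf R (insert A Γ) C → Nf R (insert B Γ) C → Nf R Γ C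
  | botE {Γ : Set Fml} (A : Fml) : Nf R Γ Fml.bot → Nf R Γ A
  | impI {Γ : Set Fml} {A B : Fml} : Nf R {A} B → Nf R Γ (A.imp B)
  | impIAnd {Γ : Set Fml} {A B C : Fml} : NRule.impAnd ∈ R →
      Nf R Γ (A.imp B) → Nf R Γ (A.imp C) → Nf R Γ (A.imp (B.and C))
  | impIOr {Γ : Set Fml} {A B C : Fml} : NRule.impOr ∈ R →
      Nf R Γ (A.imp C) → Nf R Γ (B.imp C) → Nf R Γ ((A.or B).imp C)
  | impITr {Γ : Set Fml} {A B C : Fml} : NRule.impTr ∈ R →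
      Nf R Γ (A.imp B) → Nf R Γ (B.imp C) → Nf R Γ (A.imp C)

inductive AndProj (A : Fml) : Fml → Prop
  | refl : AndProj A A
  | left {B C : Fml} : AndProj A (B.and C) → AndProj A B
  | right {B C : Fml} : AndProj A (B.and C) → AndProj A C

theorem AndProj.sizeOf_le (h : AndProj A C) : sizeOf C ≤ sizeOf A := by
  induction h with
  | refl => exact le_rfl
  | left _ ih => simp only [Fml.and.sizeOf_spec] at ih; omega
  | right _ ih => simp only [Fml.and.sizeOf_spec] at ih; omega

theorem Neu.mono (h : Neu Γ A) (hΓΔ : Γ ⊆ Δ) : Neu Δ A := by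
  induction h with
  | hyp hA => exact .hyp (hΓΔ hA)
  | andE1 _ ih => exact ih.andE1
  | andE2 _ ih => exact ih.andE2

theorem Neu.not_empty : ¬ Neu ∅ A := by
  intro h
  induction h with
  | hyp hA => exact hA
  | andE1 _ ih => exact ih
  | andE2 _ ih => exact ih

theorem Neu.of_insert (h : Neu (insert A Γ) C) : Neu Γ C ∨ AndProj A C := by
  induction h with
  | hyp hC => exact hC.elim (fun hCA => .inr (hCA ▸ .refl)) (fun hCΓ => .inl (.hyp hCΓ))
  | andE1 _ ih => exact ih.imp Neu.andE1 AndProj.left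
  | andE2 _ ih => exact ih.imp Neu.andE2 AndProj.right

theorem Nf.mono (h : Nf R Γ A) (hΓΔ : Γ ⊆ Δ) : Nf R Δ A := by
  induction h generalizing Δ with
  | ne hA => exact .ne (hA.mono hΓΔ)
  | andI _ _ ihA ihB => exact .andI (ihA hΓΔ) (ihB hΓΔ)
  | orI1 B _ ih => exact .orI1 B (ih hΓΔ)
  | orI2 A _ ih => exact .orI2 A (ih hΓΔ)
  | orE hAB _ _ ihl ihr =>
      exact .orE (hAB.mono hΓΔ) (ihl (Set.insert_subset_insert hΓΔ))
        (ihr (Set.insert_subset_insert hΓΔ))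
  | botE A _ ih => exact .botE A (ih hΓΔ)
  | impI hB => exact .impI hB
  | impIAnd hR _ _ ihB ihC => exact .impIAnd hR (ihB hΓΔ) (ihC hΓΔ)
  | impIOr hR _ _ ihA ihB => exact .impIOr hR (ihA hΓΔ) (ihB hΓΔ)
  | impITr hR _ _ ihA ihB => exact .impITr hR (ihA hΓΔ) (ihB hΓΔ)

theorem Nf.of_and (h : Nf R Γ (A.and B)) : Nf R Γ A ∧ Nf R Γ B := by
  generalize hD : A.and B = D at h
  induction h with
  | ne hD' => subst hD; exact ⟨.ne hD'.andE1, .ne hD'.andE2⟩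
  | andI hA hB => cases hD; exact ⟨hA, hB⟩
  | orE hXY _ _ ihl ihr =>
      exact ⟨.orE hXY (ihl hD).1 (ihr hD).1, .orE hXY (ihl hD).2 (ihr hD).2⟩
  | botE _ hbot => subst hD; exact ⟨.botE A hbot, .botE B hbot⟩
  | _ => cases hD

theorem Nf.proj (h : Nf R Γ A) (hAC : AndProj A C) : Nf R Γ C := by
  induction hAC with
  | refl => exact h
  | left _ ih => exact ih.of_and.1
  | right _ ih => exact ih.of_and.2

theorem Nf.orElim_of_cut {X Y : Fml}
    (cutX : ∀ {Γ C}, Nf R Γ X → Nf R (insert X Γ) C → Nf R Γ C)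
    (cutY : ∀ {Γ C}, Nf R Γ Y → Nf R (insert Y Γ) C → Nf R Γ C)
    (h : Nf R Γ (X.or Y)) (hl : Nf R (insert X Γ) C) (hr : Nf R (insert Y Γ) C) :
    Nf R Γ C := by
  generalize hD : X.or Y = D at h
  induction h with
  | ne hXY => subst hD; exact .orE hXY hl hr
  | orI1 _ hX => cases hD; exact cutX hX hl
  | orI2 _ hY => cases hD; exact cutY hY hr
  | @orE Γ _ _ _ hAB _ _ ihl ihr =>
      have hsub {Z W : Fml} : insert Z Γ ⊆ insert Z (insert W Γ) :=
        Set.insert_subset_insert (Set.subset_insert _ _)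
      exact .orE hAB (ihl (hl.mono hsub) (hr.mono hsub) hD)
        (ihr (hl.mono hsub) (hr.mono hsub) hD)
  | botE _ hbot => exact .botE C hbot
  | _ => cases hD

theorem Nf.cut_of_orElim
    (orElimA : ∀ X Y, AndProj A (X.or Y) → ∀ {Γ C}, Nf R Γ (X.or Y) →
      Nf R (insert X Γ) C → Nf R (insert Y Γ) C → Nf R Γ C)
    (hA : Nf R Γ A) (hC : Nf R (insert A Γ) C) : Nf R Γ C := by
  generalize hΔ : insert A Γ = Δ at hC
  induction hC generalizing Γ with
  | ne hC =>
      subst hΔ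
      exact hC.of_insert.elim .ne hA.proj
  | andI _ _ ihA ihB => exact .andI (ihA hA hΔ) (ihB hA hΔ)
  | orI1 B _ ih => exact .orI1 B (ih hA hΔ)
  | orI2 D _ ih => exact .orI2 D (ih hA hΔ)
  | @orE _ X Y _ hXY _ _ ihl ihr =>
      subst hΔ
      have hl := ihl (hA.mono (Set.subset_insert X Γ)) (Set.insert_comm _ _ _)
      have hr := ihr (hA.mono (Set.subset_insert Y Γ)) (Set.insert_comm _ _ _)
      exact hXY.of_insert.elim (fun hXY => .orE hXY hl hr)
        (fun hp => orElimA X Y hp (hA.proj hp) hl hr)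
  | botE B _ ih => exact .botE B (ih hA hΔ)
  | impI hB => exact .impI hB
  | impIAnd hR _ _ ihB ihC => exact .impIAnd hR (ihB hA hΔ) (ihC hA hΔ)
  | impIOr hR _ _ ihA ihB => exact .impIOr hR (ihA hA hΔ) (ihB hA hΔ)
  | impITr hR _ _ ihA ihB => exact .impITr hR (ihA hA hΔ) (ihB hA hΔ)

theorem Nf.cut {Γ : Set Fml} {A C : Fml} (hA : Nf R Γ A) (hC : Nf R (insert A Γ) C) :
    Nf R Γ C :=
  hA.cut_of_orElim (fun X Y hp _ _ h hl hr =>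
    have := hp.sizeOf_le
    h.orElim_of_cut (fun hX hXC => hX.cut hXC) (fun hY hYC => hY.cut hYC) hl hr) hC
termination_by sizeOf A
decreasing_by all_goals simp only [Fml.or.sizeOf_spec] at this; omega

theorem Nf.orElim {X Y : Fml} (h : Nf R Γ (X.or Y)) (hl : Nf R (insert X Γ) C)
    (hr : Nf R (insert Y Γ) C) : Nf R Γ C :=
  h.orElim_of_cut Nf.cut Nf.cut hl hr

theorem Nf.mp (hAB : Nf R ∅ (A.imp B)) (hA : Nf R Γ A) : Nf R Γ B := by
  generalize hΔ : (∅ : Set Fml) = Δ at hAB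
  generalize hD : A.imp B = D at hAB
  induction hAB generalizing Γ A B with
  | ne hD' => subst hΔ; exact absurd hD' Neu.not_empty
  | orE hXY => subst hΔ; exact absurd hXY Neu.not_empty
  | botE _ hbot => subst hΔ; exact .botE B (hbot.mono (Set.empty_subset Γ))
  | impI hB =>
      cases hD
      exact hA.cut (hB.mono (Set.singleton_subset_iff.2 (Set.mem_insert _ _)))
  | impIAnd _ _ _ ihB ihC => cases hD; exact .andI (ihB hA hΔ rfl) (ihC hA hΔ rfl)
  | impIOr _ _ _ ihl ihr =>
      cases hD
      exact hA.orElim (ihl (.ne (.hyp (Set.mem_insert _ _))) hΔ rfl)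
        (ihr (.ne (.hyp (Set.mem_insert _ _))) hΔ rfl)
  | impITr _ _ _ ihA ihB => cases hD; exact ihB (ihA hA hΔ rfl) hΔ rfl
  | _ => cases hD

theorem Deriv.toNf (hR : R ⊆ {NRule.impTr, NRule.impAnd, NRule.impOr}) (d : Deriv R Γ A) :
    Nf R Γ A := by
  induction d with
  | hyp Γ A hA => exact .ne (.hyp hA)
  | andI _ _ ihA ihB => exact .andI ihA ihB
  | andE1 _ ih => exact ih.of_and.1
  | andE2 _ ih => exact ih.of_and.2
  | orI1 B _ ih => exact .orI1 B ih
  | orI2 A _ ih => exact .orI2 A ih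
  | orE _ _ _ ih ihl ihr => exact ih.orElim ihl ihr
  | botE A _ ih => exact .botE A ih
  | impI _ ih => exact .impI ih
  | impE _ _ ihA ihAB => exact ihAB.mp ihA
  | impIAnd h _ _ ihB ihC => exact .impIAnd h ihB ihC
  | impIOr h _ _ ihA ihB => exact .impIOr h ihA ihB
  | impITr h _ _ ihA ihB => exact .impITr h ihA ihB
  | impI1 h | impI2 h | impIN h | impIN2 h | impIChat _ h | impIDhat _ h =>
      exact absurd (hR h) (by simp)

theorem Neu.exists_deriv (h : Neu Γ A) : ∃ d : Deriv R Γ A, d.MajorOK ∧ d.Normal := by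
  induction h with
  | hyp hA => exact ⟨.hyp _ _ hA, trivial, trivial⟩
  | andE1 _ ih => obtain ⟨d, hd⟩ := ih; exact ⟨d.andE1, trivial, hd⟩
  | andE2 _ ih => obtain ⟨d, hd⟩ := ih; exact ⟨d.andE2, trivial, hd⟩

theorem Nf.exists_normal (h : Nf R Γ A) : ∃ d : Deriv R Γ A, d.Normal := by
  induction h with
  | ne hA =>
      obtain ⟨d, -, hd⟩ := hA.exists_deriv
      exact ⟨d, hd⟩
  | andI _ _ ihA ihB =>
      obtain ⟨dA, hA⟩ := ihA
      obtain ⟨dB, hB⟩ := ihB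
      exact ⟨dA.andI dB, hA, hB⟩
  | orI1 B _ ih =>
      obtain ⟨d, hd⟩ := ih
      exact ⟨d.orI1 B, hd⟩
  | orI2 A _ ih =>
      obtain ⟨d, hd⟩ := ih
      exact ⟨d.orI2 A, hd⟩
  | orE hAB _ _ ihl ihr =>
      obtain ⟨d, hd⟩ := hAB.exists_deriv
      obtain ⟨dl, hl⟩ := ihl
      obtain ⟨dr, hr⟩ := ihr
      exact ⟨d.orE dl dr, hd.1, hd.2, hl, hr⟩
  | botE A _ ih =>
      obtain ⟨d, hd⟩ := ih
      exact ⟨d.botE A, hd⟩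
  | impI _ ih =>
      obtain ⟨d, hd⟩ := ih
      exact ⟨d.impI, hd⟩
  | impIAnd hR _ _ ihB ihC =>
      obtain ⟨dB, hB⟩ := ihB
      obtain ⟨dC, hC⟩ := ihC
      exact ⟨.impIAnd hR dB dC, hB, hC⟩
  | impIOr hR _ _ ihA ihB =>
      obtain ⟨dA, hA⟩ := ihA
      obtain ⟨dB, hB⟩ := ihB
      exact ⟨.impIOr hR dA dB, hA, hB⟩
  | impITr hR _ _ ihA ihB =>
      obtain ⟨dA, hA⟩ := ihA
      obtain ⟨dB, hB⟩ := ihB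
      exact ⟨.impITr hR dA dB, hA, hB⟩

theorem normalization_NF (Γ : Set Fml) (A : Fml)
    (d : Deriv {NRule.impTr, NRule.impAnd, NRule.impOr} Γ A) :
    ∃ d' : Deriv {NRule.impTr, NRule.impAnd, NRule.impOr} Γ A, d'.Normal :=
  (d.toNf subset_rfl).exists_normal
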